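/- For every z ∈ ℂ with |z| ≤ 1, one has |1 − √(1−z²)| ≤ 1 + √(1−|z|²) ≤ |1 + √(1−z²)|, where √(1−|z|²) is the real square root of the nonnegative real number 1−|z|². -/

import Mathlib

/-- The principal (arithmetic) complex square root: the square root with
positive real part, or with zero real part and nonnegative imaginary part. -/
noncomputable def csqrt (z : ℂ) : ℂ := z ^ (1 / 2 : ℂ)

lemma csqrt_re_nonneg (x : ℂ) : 0 ≤ (csqrt x).re := by
  rcases eq_or_ne x 0 with rfl | hx
  · simp [csqrt, Complex.zero_cpow (by norm_num : (1/2 : ℂ) ≠ 0)]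
  · rw [csqrt, Complex.cpow_def_of_ne_zero hx, Complex.exp_re]
    have him : (Complex.log x * (1/2)).im = x.arg / 2 := by
      simp [Complex.mul_im, Complex.log_im]
      ring
    rw [him]
    have h1 := Complex.neg_pi_lt_arg x
    have h2 := Complex.arg_le_pi x
    have : 0 ≤ Real.cos (x.arg / 2) :=
      Real.cos_nonneg_of_mem_Icc ⟨by linarith, by linarith⟩
    positivity

lemma csqrt_sq (x : ℂ) : (csqrt x) ^ 2 = x := by
  have := Complex.cpow_nat_inv_pow x (n := 2) (by norm_num)
  simp [csqrt, show ((2:ℕ):ℂ)⁻¹ = 1/2 by norm_num]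

/-- For every `z ∈ ℂ` with `|z| ≤ 1`,
`|1 − √(1−z²)| ≤ 1 + √(1−|z|²) ≤ |1 + √(1−z²)|`,
where the middle square root is the real one. -/
theorem stmt5 (z : ℂ) (hz : ‖z‖ ≤ 1) :
    ‖1 - csqrt (1 - z ^ 2)‖ ≤ 1 + Real.sqrt (1 - ‖z‖ ^ 2) ∧
    1 + Real.sqrt (1 - ‖z‖ ^ 2) ≤ ‖1 + csqrt (1 - z ^ 2)‖ := by
  set w := csqrt (1 - z ^ 2) with hw
  set a := ‖1 - w‖ with ha
  set b := ‖1 + w‖ with hb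
  set s := Real.sqrt (1 - ‖z‖ ^ 2) with hs
  have hz2 : (0:ℝ) ≤ 1 - ‖z‖ ^ 2 := by nlinarith [norm_nonneg z]
  have hs0 : 0 ≤ s := Real.sqrt_nonneg _
  have hssq : s ^ 2 = 1 - ‖z‖ ^ 2 := Real.sq_sqrt hz2
  have hs1 : s ≤ 1 := by nlinarith [norm_nonneg z]
  have hwsq : w ^ 2 = 1 - z ^ 2 := csqrt_sq _
  have hre : 0 ≤ w.re := csqrt_re_nonneg _
  have ha0 : 0 ≤ a := norm_nonneg _
  have hb0 : 0 ≤ b := norm_nonneg _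
  -- a*b = |z|^2 = 1 - s^2
  have hab : a * b = 1 - s ^ 2 := by
    have : (1 - w) * (1 + w) = z ^ 2 := by ring_nf; linear_combination -hwsq
    rw [ha, hb, ← norm_mul, this, norm_pow]
    nlinarith
  -- a ≤ b
  have haleb : a ≤ b := by
    have h1 : a ^ 2 = Complex.normSq (1 - w) := by
      rw [ha, ← Complex.sq_norm]
    have h2 : b ^ 2 = Complex.normSq (1 + w) := by
      rw [hb, ← Complex.sq_norm]
    have h3 : Complex.normSq (1 - w) = 1 - 2 * w.re + Complex.normSq w := by
      simp [Complex.normSq_apply, Complex.sub_re, Complex.sub_im]; ring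
    have h4 : Complex.normSq (1 + w) = 1 + 2 * w.re + Complex.normSq w := by
      simp [Complex.normSq_apply, Complex.add_re, Complex.add_im]; ring
    nlinarith
  -- a^2 + b^2 ≥ 2 + 2 s^2
  have hsum : 2 + 2 * s ^ 2 ≤ a ^ 2 + b ^ 2 := by
    have h1 : a ^ 2 = Complex.normSq (1 - w) := by rw [ha, ← Complex.sq_norm]
    have h2 : b ^ 2 = Complex.normSq (1 + w) := by rw [hb, ← Complex.sq_norm]
    have h3 : Complex.normSq (1 - w) = 1 - 2 * w.re + Complex.normSq w := by
      simp [Complex.normSq_apply, Complex.sub_re, Complex.sub_im]; ring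
    have h4 : Complex.normSq (1 + w) = 1 + 2 * w.re + Complex.normSq w := by
      simp [Complex.normSq_apply, Complex.add_re, Complex.add_im]; ring
    have h5 : Complex.normSq w = ‖1 - z ^ 2‖ := by
      rw [← Complex.sq_norm, ← norm_pow, hwsq]
    have h6 : s ^ 2 ≤ ‖1 - z ^ 2‖ := by
      have h7 := norm_sub_norm_le (1 : ℂ) (z ^ 2)
      rw [norm_one, norm_pow] at h7
      nlinarith
    nlinarith
  constructor
  · -- a ≤ 1 + s
    by_contra h
    push_neg at h
    have hb' : 1 + s < b := lt_of_lt_of_le h haleb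
    nlinarith
  · -- 1 + s ≤ b
    have h1 : 2 * s ≤ b - a := by
      have : (2*s)^2 ≤ (b - a)^2 := by nlinarith
      have h2 : 0 ≤ b - a := by linarith
      nlinarith
    have h3 : 2 ≤ a + b := by
      have : (2:ℝ)^2 ≤ (a + b)^2 := by nlinarith
      nlinarith
    linarith
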